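/- For an integer d ≥ 1 and p = 5, write T₁ = θ^{(5,d)}_{0,0}, T₂ = θ^{(5,d)}_{1,0}, T₃ = θ^{(5,d)}_{0,1}, T₄ = θ^{(5,d)}_{1,1}, T₅ = θ^{(5,d)}_{0,2}, T₆ = θ^{(5,d)}_{2,0}, T₇ = θ^{(5,d)}_{2,1}, T₈ = θ^{(5,d)}_{1,2}, T₉ = θ^{(5,d)}_{1,3}. Let P₁ = T₁² + 4T₁T₃ + 4T₃² + 4T₁T₅ + 8T₃T₅ + 4T₅² and P₂ = T₁² + 8T₃T₅ + 4T₂T₆ + 8T₄T₈ + 4T₇T₉ (which come from distinct symmetric weight enumerator polynomials). Then for d = 5 (level ℓ = 19) one has P₁ = P₂ in ℤ[[q]], while for d = 10 (level ℓ = 39) one has P₁ ≠ P₂. -/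

import Mathlib

noncomputable section

/-- The positive definite quadratic form `Q_d(x,y) = x² + xy + d y²`. -/
def Qform (d : ℕ) (x y : ℤ) : ℤ := x ^ 2 + x * y + (d : ℤ) * y ^ 2

/-- The coset theta series `θ^{(p,d)}_{a,b}`. -/
def cosetTheta (p d : ℕ) (a b : ℤ) : PowerSeries ℤ :=
  PowerSeries.mk fun k =>
    (Set.ncard {mn : ℤ × ℤ |
      Qform d ((p : ℤ) * mn.1 + a) ((p : ℤ) * mn.2 + b) = (k : ℤ)} : ℤ)

/-- The nine coset theta series for `p = 5`:
`T₁ = θ_{0,0}, T₂ = θ_{1,0}, T₃ = θ_{0,1}, T₄ = θ_{1,1}, T₅ = θ_{0,2},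
T₆ = θ_{2,0}, T₇ = θ_{2,1}, T₈ = θ_{1,2}, T₉ = θ_{1,3}`. -/
def T5 (d : ℕ) : Fin 9 → PowerSeries ℤ :=
  ![cosetTheta 5 d 0 0, cosetTheta 5 d 1 0, cosetTheta 5 d 0 1, cosetTheta 5 d 1 1,
    cosetTheta 5 d 0 2, cosetTheta 5 d 2 0, cosetTheta 5 d 2 1, cosetTheta 5 d 1 2,
    cosetTheta 5 d 1 3]

open MvPolynomial in
/-- `P₁ = T₁² + 4T₁T₃ + 4T₃² + 4T₁T₅ + 8T₃T₅ + 4T₅²` as a polynomial. -/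
def P1 : MvPolynomial (Fin 9) ℤ :=
  X 0 ^ 2 + 4 * X 0 * X 2 + 4 * X 2 ^ 2 + 4 * X 0 * X 4 + 8 * X 2 * X 4 + 4 * X 4 ^ 2

open MvPolynomial in
/-- `P₂ = T₁² + 8T₃T₅ + 4T₂T₆ + 8T₄T₈ + 4T₇T₉` as a polynomial. -/
def P2 : MvPolynomial (Fin 9) ℤ :=
  X 0 ^ 2 + 8 * X 2 * X 4 + 4 * X 1 * X 5 + 8 * X 3 * X 7 + 4 * X 6 * X 8

/-!
Write `θ_c` for the theta series of `Q_d` on the coset `c ∈ (ℤ/5)²` of `5ℤ²`. The automorphisms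
`-1` and `(x, y) ↦ (x + y, -y)` of `Q_d` permute these cosets, and the 25 residues fall into the
9 orbits represented by the cosets of `T₁, …, T₉`. Hence `P₁(T) = (Σ_b θ_{(0,b)})²` is the theta
series of `Q_d ⊕ Q_d` on `L × L` with `L = {5 ∣ x}`, and `P₂(T) = Σ_c θ_c θ_{2c}` is the theta series
of `Q_d ⊕ Q_d` on `M = {(v, w) : w ≡ 2v mod 5}`. For `d = 5` an explicit change of basis is an
isometry between `L × L` and `M`. For `d = 10` the two series differ at `q⁵`: `Q₁₀` takes no value
in `1, …, 9` on `L`, whereas `Q₁₀(1, 0) + Q₁₀(2, 0) = 5` on `M`.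
-/

open Set Function Finset.HasAntidiagonal

section ThetaSeries

variable {α β : Type*}

/-- `Σ_{x ∈ s} q^{f x}`. Since `Set.ncard` of an infinite set is `0`, this is the honest theta
series only when the level sets of `f` on `s` are finite. -/
def thetaOn (f : α → ℤ) (s : Set α) : PowerSeries ℤ :=
  PowerSeries.mk fun k => ({x ∈ s | f x = k}.ncard : ℤ)

lemma coeff_thetaOn (f : α → ℤ) (s : Set α) (k : ℕ) :
    PowerSeries.coeff k (thetaOn f s) = ({x ∈ s | f x = k}.ncard : ℤ) :=
  PowerSeries.coeff_mk _ _

lemma thetaOn_image {e : α → β} (he : Injective e) (f : β → ℤ) (s : Set α) :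
    thetaOn f (e '' s) = thetaOn (f ∘ e) s := by
  ext k
  rw [coeff_thetaOn, coeff_thetaOn, ← ncard_image_of_injective _ he]
  congr 2
  ext y
  simp only [mem_image, comp_apply]
  constructor
  · rintro ⟨⟨x, hx, rfl⟩, hk⟩
    exact ⟨x, ⟨hx, hk⟩, rfl⟩
  · rintro ⟨x, ⟨hx, hk⟩, rfl⟩
    exact ⟨⟨x, hx, rfl⟩, hk⟩

lemma thetaOn_image_of_comp_eq {e : α → α} (he : Injective e) {f : α → ℤ} (hf : f ∘ e = f)
    (s : Set α) : thetaOn f (e '' s) = thetaOn f s := by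
  rw [thetaOn_image he, hf]

lemma thetaOn_univ_comp_equiv (e : α ≃ β) (f : β → ℤ) :
    thetaOn (f ∘ e) univ = thetaOn f univ := by
  rw [← thetaOn_image e.injective, image_univ_of_surjective e.surjective]

lemma thetaOn_iUnion {ι : Type*} [Fintype ι] {f : α → ℤ} (hf : ∀ k : ℕ, {x | f x = k}.Finite)
    {s : ι → Set α} (hs : Pairwise (Disjoint on s)) :
    thetaOn f (⋃ i, s i) = ∑ i, thetaOn f (s i) := by
  ext k
  have hsep : {x ∈ ⋃ i, s i | f x = k} = ⋃ i, {x ∈ s i | f x = k} := by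
    ext x
    simp
  rw [map_sum, coeff_thetaOn, hsep,
    ncard_iUnion_of_finite (s := fun i => {x ∈ s i | f x = k})
      (fun i => (hf k).subset fun x hx => hx.2)
      (fun i j hij => (hs hij).mono (sep_subset _ _) (sep_subset _ _)),
    finsum_eq_sum_of_fintype, Nat.cast_sum]
  simp only [coeff_thetaOn]

lemma setOf_add_eq_eq_biUnion {f : α → ℤ} {g : β → ℤ} (hf0 : ∀ x, 0 ≤ f x) (hg0 : ∀ y, 0 ≤ g y)
    (s : Set α) (t : Set β) (k : ℕ) :
    {w ∈ s ×ˢ t | f w.1 + g w.2 = k} =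
      ⋃ ij ∈ (antidiagonal k : Set (ℕ × ℕ)), {x ∈ s | f x = ij.1} ×ˢ {y ∈ t | g y = ij.2} := by
  ext ⟨x, y⟩
  simp only [mem_prod, mem_iUnion, Finset.mem_coe, Finset.HasAntidiagonal.mem_antidiagonal,
    exists_prop, Prod.exists]
  constructor
  · rintro ⟨⟨hx, hy⟩, hk⟩
    refine ⟨(f x).toNat, (g y).toNat, ?_, ⟨hx, ?_⟩, hy, ?_⟩ <;> grind
  · rintro ⟨i, j, hij, ⟨hx, hi⟩, hy, hj⟩
    exact ⟨⟨hx, hy⟩, by rw [hi, hj, ← hij, Nat.cast_add]⟩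

lemma finite_setOf_add_eq {f : α → ℤ} {g : β → ℤ} (hf0 : ∀ x, 0 ≤ f x) (hg0 : ∀ y, 0 ≤ g y)
    (hf : ∀ k : ℕ, {x | f x = k}.Finite) (hg : ∀ k : ℕ, {y | g y = k}.Finite) (k : ℕ) :
    {w : α × β | f w.1 + g w.2 = k}.Finite := by
  have h := setOf_add_eq_eq_biUnion hf0 hg0 univ univ k
  simp only [univ_prod_univ, sep_univ] at h
  rw [h]
  exact (Finset.finite_toSet _).biUnion fun ij _ => (hf ij.1).prod (hg ij.2)

lemma thetaOn_prod {f : α → ℤ} {g : β → ℤ} (hf0 : ∀ x, 0 ≤ f x) (hg0 : ∀ y, 0 ≤ g y)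
    (hf : ∀ k : ℕ, {x | f x = k}.Finite) (hg : ∀ k : ℕ, {y | g y = k}.Finite)
    (s : Set α) (t : Set β) :
    thetaOn (fun w => f w.1 + g w.2) (s ×ˢ t) = thetaOn f s * thetaOn g t := by
  ext k
  have hdisj : (antidiagonal k : Set (ℕ × ℕ)).PairwiseDisjoint
      fun ij => {x ∈ s | f x = ij.1} ×ˢ {y ∈ t | g y = ij.2} := by
    rintro ⟨i, j⟩ - ⟨i', j'⟩ - hne
    refine Set.disjoint_left.mpr fun ⟨x, y⟩ ⟨⟨_, hi⟩, _, hj⟩ ⟨⟨_, hi'⟩, _, hj'⟩ => hne ?_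
    simp only at hi hj hi' hj'
    ext <;> simp only <;> omega
  rw [coeff_thetaOn, PowerSeries.coeff_mul, setOf_add_eq_eq_biUnion hf0 hg0,
    (Finset.finite_toSet _).ncard_biUnion
      (fun ij _ => ((hf ij.1).subset fun x hx => hx.2).prod ((hg ij.2).subset fun y hy => hy.2))
      hdisj,
    finsum_mem_coe_finset, Nat.cast_sum]
  simp only [coeff_thetaOn, ncard_prod, Nat.cast_mul]

end ThetaSeries

section QuadraticForm

def Qpair (d : ℕ) (v : ℤ × ℤ) : ℤ := Qform d v.1 v.2

lemma four_mul_Qform (d : ℕ) (x y : ℤ) :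
    4 * Qform d x y = (2 * x + y) ^ 2 + (4 * d - 1) * y ^ 2 := by
  unfold Qform
  ring

variable {d : ℕ}

lemma Qform_nonneg (hd : 1 ≤ d) (x y : ℤ) : 0 ≤ Qform d x y := by
  have h := four_mul_Qform d x y
  have : (1 : ℤ) ≤ d := by exact_mod_cast hd
  nlinarith [sq_nonneg (2 * x + y), sq_nonneg y]

lemma Qpair_nonneg (hd : 1 ≤ d) (v : ℤ × ℤ) : 0 ≤ Qpair d v :=
  Qform_nonneg hd v.1 v.2

lemma finite_setOf_Qpair_eq (hd : 1 ≤ d) (k : ℕ) : {v | Qpair d v = k}.Finite := by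
  refine (finite_Icc (-4 * (k : ℤ), -4 * (k : ℤ)) (4 * k, 4 * k)).subset ?_
  rintro ⟨x, y⟩ (hv : Qform d x y = k)
  have h := four_mul_Qform d x y
  have : (1 : ℤ) ≤ d := by exact_mod_cast hd
  have hy : y ^ 2 ≤ 4 * k := by nlinarith [sq_nonneg (2 * x + y), sq_nonneg y]
  have hxy : (2 * x + y) ^ 2 ≤ 4 * k := by nlinarith [sq_nonneg (2 * x + y), sq_nonneg y]
  have := Int.natAbs_le_self_sq y
  have := Int.natAbs_le_self_sq (2 * x + y)
  simp only [mem_Icc, Prod.mk_le_mk]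
  omega

def shear {R : Type*} [Ring R] (v : R × R) : R × R := (v.1 + v.2, -v.2)

lemma shear_involutive {R : Type*} [Ring R] : Involutive (shear (R := R)) := fun v => by
  simp [shear]

lemma Qpair_comp_neg (d : ℕ) : Qpair d ∘ Neg.neg = Qpair d := by
  ext v
  simp only [comp_apply, Qpair, Qform, Prod.fst_neg, Prod.snd_neg]
  ring

lemma Qpair_comp_shear (d : ℕ) : Qpair d ∘ shear = Qpair d := by
  ext v
  simp only [comp_apply, Qpair, Qform, shear]
  ring

end QuadraticForm

section Cosets

variable {p : ℕ}

def intCoset (p : ℕ) (c : ZMod p × ZMod p) : Set (ℤ × ℤ) :=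
  {x : ℤ | (x : ZMod p) = c.1} ×ˢ {y : ℤ | (y : ZMod p) = c.2}

lemma mem_intCoset (c : ZMod p × ZMod p) (v : ℤ × ℤ) :
    v ∈ intCoset p c ↔ ((v.1 : ZMod p), (v.2 : ZMod p)) = c := by
  simp [intCoset, Prod.ext_iff]

lemma pairwise_disjoint_intCoset (p : ℕ) : Pairwise (Disjoint on intCoset p) := by
  intro c c' hne
  refine Set.disjoint_left.mpr fun v hc hc' => hne ?_
  rw [mem_intCoset] at hc hc'
  rw [← hc, ← hc']

lemma range_mul_add (p : ℕ) (a : ℤ) :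
    range (fun m : ℤ => (p : ℤ) * m + a) = {x : ℤ | (x : ZMod p) = a} := by
  ext x
  simp only [mem_range, mem_ofPred_eq, ZMod.intCast_eq_intCast_iff_dvd_sub]
  constructor
  · rintro ⟨m, rfl⟩
    exact ⟨-m, by ring⟩
  · rintro ⟨m, hm⟩
    exact ⟨-m, by linarith⟩

lemma intCast_eq_mul_intCast_iff (p : ℕ) (m x y : ℤ) :
    (y : ZMod p) = m * x ↔ ∃ u, y = m * x + p * u := by
  rw [← Int.cast_mul, eq_comm, ZMod.intCast_eq_intCast_iff_dvd_sub]
  exact exists_congr fun u => by constructor <;> intro h <;> linarith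

lemma cosetTheta_eq_thetaOn (hp : p ≠ 0) (d : ℕ) (a b : ℤ) :
    cosetTheta p d a b = thetaOn (Qpair d) (intCoset p (a, b)) := by
  have hinj : ∀ c : ℤ, Injective fun m : ℤ => (p : ℤ) * m + c := fun c m n h => by
    simpa [hp] using h
  rw [intCoset, ← range_mul_add, ← range_mul_add, ← range_prodMap, ← image_univ,
    thetaOn_image ((hinj a).prodMap (hinj b))]
  ext k
  simp [cosetTheta, coeff_thetaOn, Qpair]

lemma neg_image_intCoset (c : ZMod p × ZMod p) : Neg.neg '' intCoset p c = intCoset p (-c) := by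
  rw [image_eq_preimage_of_inverse neg_involutive.leftInverse neg_involutive.rightInverse]
  ext v
  simp [intCoset, neg_eq_iff_eq_neg]

lemma shear_image_intCoset (c : ZMod p × ZMod p) :
    shear '' intCoset p c = intCoset p (shear c) := by
  rw [image_eq_preimage_of_inverse shear_involutive.leftInverse shear_involutive.rightInverse]
  ext v
  simp only [mem_preimage, intCoset, shear, mem_prod, mem_ofPred_eq, Int.cast_add, Int.cast_neg]
  constructor
  · rintro ⟨h1, h2⟩
    exact ⟨by linear_combination h1 + h2, by linear_combination -h2⟩
  · rintro ⟨h1, h2⟩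
    exact ⟨by linear_combination h1 + h2, by linear_combination -h2⟩

lemma thetaOn_intCoset_neg (d : ℕ) (c : ZMod p × ZMod p) :
    thetaOn (Qpair d) (intCoset p (-c)) = thetaOn (Qpair d) (intCoset p c) := by
  rw [← neg_image_intCoset, thetaOn_image_of_comp_eq neg_injective (Qpair_comp_neg d)]

lemma thetaOn_intCoset_shear (d : ℕ) (c : ZMod p × ZMod p) :
    thetaOn (Qpair d) (intCoset p (shear c)) = thetaOn (Qpair d) (intCoset p c) := by
  rw [← shear_image_intCoset,
    thetaOn_image_of_comp_eq shear_involutive.injective (Qpair_comp_shear d)]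

lemma iUnion_intCoset_zero_left (p : ℕ) :
    ⋃ b, intCoset p (0, b) = range fun v : ℤ × ℤ => ((p : ℤ) * v.1, v.2) := by
  ext ⟨x, y⟩
  have h := intCast_eq_mul_intCast_iff p 0 0 x
  simp only [Int.cast_zero, zero_mul, zero_add] at h
  simp only [mem_iUnion, mem_intCoset, Prod.mk.injEq, exists_and_left, exists_eq', and_true,
    mem_range, Prod.exists, h, exists_eq, eq_comm]

lemma iUnion_intCoset_prod_intCoset_mul (p : ℕ) (m : ℤ) :
    ⋃ c, intCoset p c ×ˢ intCoset p ((m : ZMod p × ZMod p) * c) =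
      range fun w : (ℤ × ℤ) × (ℤ × ℤ) => (w.1, m • w.1 + (p : ℤ) • w.2) := by
  ext ⟨⟨x, y⟩, ⟨x', y'⟩⟩
  simp only [mem_iUnion, mem_prod, mem_intCoset, mem_range, Prod.ext_iff, Prod.fst_mul,
    Prod.snd_mul, Prod.fst_intCast, Prod.snd_intCast, Prod.fst_add, Prod.snd_add, Prod.smul_fst,
    Prod.smul_snd, smul_eq_mul, Prod.exists]
  constructor
  · rintro ⟨_, _, ⟨rfl, rfl⟩, h1, h2⟩
    obtain ⟨u, rfl⟩ := (intCast_eq_mul_intCast_iff p m x x').1 h1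
    obtain ⟨u', rfl⟩ := (intCast_eq_mul_intCast_iff p m y y').1 h2
    exact ⟨x, y, u, u', ⟨rfl, rfl⟩, rfl, rfl⟩
  · rintro ⟨x, y, u, u', ⟨rfl, rfl⟩, rfl, rfl⟩
    exact ⟨_, _, ⟨rfl, rfl⟩, (intCast_eq_mul_intCast_iff p m _ _).2 ⟨u, rfl⟩,
      (intCast_eq_mul_intCast_iff p m _ _).2 ⟨u', rfl⟩⟩

lemma injective_fst_smul_add_smul {m p : ℤ} (hp : p ≠ 0) :
    Injective fun w : (ℤ × ℤ) × (ℤ × ℤ) => (w.1, m • w.1 + p • w.2) := by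
  rintro ⟨v, w⟩ ⟨v', w'⟩ h
  simp only [Prod.mk.injEq] at h
  obtain ⟨rfl, h⟩ := h
  rw [smul_right_injective _ hp (add_left_cancel h)]

end Cosets

def cosetRep : Fin 9 → ZMod 5 × ZMod 5 :=
  ![(0, 0), (1, 0), (0, 1), (1, 1), (0, 2), (2, 0), (2, 1), (1, 2), (1, 3)]

/-- The index `i` of the orbit of `c` under `±1` and `±shear`, with representative `cosetRep i`. -/
def cosetClass (c : ZMod 5 × ZMod 5) : Fin 9 :=
  (![![0, 2, 4, 4, 2], ![1, 3, 7, 8, 2], ![5, 6, 7, 4, 3], ![5, 3, 4, 7, 6],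
    ![1, 2, 8, 7, 3]] : Fin 5 → Fin 5 → Fin 9) c.1 c.2

lemma cosetRep_cosetClass (c : ZMod 5 × ZMod 5) :
    cosetRep (cosetClass c) = c ∨ cosetRep (cosetClass c) = -c ∨
      cosetRep (cosetClass c) = shear c ∨ cosetRep (cosetClass c) = -shear c := by
  revert c
  decide

lemma T5_eq_thetaOn (d : ℕ) (i : Fin 9) :
    T5 d i = thetaOn (Qpair d) (intCoset 5 (cosetRep i)) := by
  fin_cases i <;> simp [T5, cosetRep, cosetTheta_eq_thetaOn]

lemma T5_cosetClass (d : ℕ) (c : ZMod 5 × ZMod 5) :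
    T5 d (cosetClass c) = thetaOn (Qpair d) (intCoset 5 c) := by
  rw [T5_eq_thetaOn]
  rcases cosetRep_cosetClass c with h | h | h | h <;>
    simp only [h, thetaOn_intCoset_neg, thetaOn_intCoset_shear]

lemma map_cosetClass_zero_left :
    (Finset.univ : Finset (ZMod 5)).val.map (fun b => cosetClass (0, b)) =
      {0} + Multiset.replicate 2 2 + Multiset.replicate 2 4 := by
  decide

lemma map_cosetClass_two_mul :
    (Finset.univ : Finset (ZMod 5 × ZMod 5)).val.map
        (fun c => (cosetClass c, cosetClass (2 * c))) =
      {(0, 0)} + Multiset.replicate 2 (1, 5) + Multiset.replicate 2 (5, 1) +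
      Multiset.replicate 4 (2, 4) + Multiset.replicate 4 (4, 2) + Multiset.replicate 4 (3, 7) +
      Multiset.replicate 4 (7, 3) + Multiset.replicate 2 (6, 8) + Multiset.replicate 2 (8, 6) := by
  decide

open MvPolynomial in
lemma P1_eq_sq_sum : P1 = (∑ b : ZMod 5, X (cosetClass (0, b))) ^ 2 := by
  have h := congrArg (fun m => (m.map (X (R := ℤ))).sum) map_cosetClass_zero_left
  simp only [Multiset.map_map, comp_def, ← Finset.sum_eq_multiset_sum] at h
  rw [h]
  simp only [Multiset.map_add, Multiset.sum_add, Multiset.map_replicate, Multiset.sum_replicate,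
    Multiset.map_singleton, Multiset.sum_singleton, nsmul_eq_mul, P1]
  push_cast
  ring

open MvPolynomial in
lemma P2_eq_sum :
    P2 = ∑ c : ZMod 5 × ZMod 5, X (cosetClass c) * X (cosetClass (2 * c)) := by
  have h := congrArg (fun m => (m.map fun ij : Fin 9 × Fin 9 =>
    (X ij.1 * X ij.2 : MvPolynomial (Fin 9) ℤ)).sum) map_cosetClass_two_mul
  simp only [Multiset.map_map, comp_def, ← Finset.sum_eq_multiset_sum] at h
  rw [h]
  simp only [Multiset.map_add, Multiset.sum_add, Multiset.map_replicate, Multiset.sum_replicate,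
    Multiset.map_singleton, Multiset.sum_singleton, nsmul_eq_mul, P2]
  push_cast
  ring

section Lattices

/-- `Q_d ⊕ Q_d` on `{(v, w) : 5 ∣ v.1, 5 ∣ w.1}`, in the coordinates `v = (5a, b)`, `w = (5c, e)`. -/
def P1Form (d : ℕ) (w : (ℤ × ℤ) × (ℤ × ℤ)) : ℤ :=
  Qform d (5 * w.1.1) w.1.2 + Qform d (5 * w.2.1) w.2.2

/-- `Q_d ⊕ Q_d` on `{(v, w) : w ≡ 2v mod 5}`, in the coordinates `(v, u)` with `w = 2v + 5u`. -/
def P2Form (d : ℕ) (w : (ℤ × ℤ) × (ℤ × ℤ)) : ℤ :=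
  Qform d w.1.1 w.1.2 + Qform d (2 * w.1.1 + 5 * w.2.1) (2 * w.1.2 + 5 * w.2.2)

variable {d : ℕ}

lemma thetaOn_Qpair_add_Qpair (hd : 1 ≤ d) (s t : Set (ℤ × ℤ)) :
    thetaOn (fun w : (ℤ × ℤ) × (ℤ × ℤ) => Qpair d w.1 + Qpair d w.2) (s ×ˢ t) =
      thetaOn (Qpair d) s * thetaOn (Qpair d) t :=
  thetaOn_prod (Qpair_nonneg hd) (Qpair_nonneg hd)
    (finite_setOf_Qpair_eq hd) (finite_setOf_Qpair_eq hd) s t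

lemma aeval_P1 (hd : 1 ≤ d) : MvPolynomial.aeval (T5 d) P1 = thetaOn (P1Form d) univ := by
  have hinj : Injective fun v : ℤ × ℤ => (((5 : ℕ) : ℤ) * v.1, v.2) := fun v w h => by
    simp only [Prod.mk.injEq] at h
    exact Prod.ext (by omega) h.2
  have hsum : ∑ b : ZMod 5, T5 d (cosetClass (0, b)) =
      thetaOn (Qpair d) (range fun v : ℤ × ℤ => (((5 : ℕ) : ℤ) * v.1, v.2)) := by
    simp only [T5_cosetClass]
    rw [← iUnion_intCoset_zero_left, thetaOn_iUnion (finite_setOf_Qpair_eq hd)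
      ((pairwise_disjoint_intCoset 5).comp_of_injective fun b b' h => (Prod.mk.inj h).2)]
  rw [P1_eq_sq_sum, map_pow, map_sum]
  simp only [MvPolynomial.aeval_X]
  rw [hsum, sq, ← thetaOn_Qpair_add_Qpair hd, ← range_prodMap, ← image_univ,
    thetaOn_image (hinj.prodMap hinj)]
  rfl

lemma aeval_P2 (hd : 1 ≤ d) : MvPolynomial.aeval (T5 d) P2 = thetaOn (P2Form d) univ := by
  have htwo : ∀ c : ZMod 5 × ZMod 5, 2 * c = ((2 : ℤ) : ZMod 5 × ZMod 5) * c := fun c => by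
    norm_num
  rw [P2_eq_sum, map_sum]
  simp only [map_mul, MvPolynomial.aeval_X, T5_cosetClass, ← thetaOn_Qpair_add_Qpair hd, htwo]
  rw [← thetaOn_iUnion (finite_setOf_add_eq (Qpair_nonneg hd) (Qpair_nonneg hd)
      (finite_setOf_Qpair_eq hd) (finite_setOf_Qpair_eq hd))
      fun c c' hne => Set.disjoint_prod.2 (Or.inl (pairwise_disjoint_intCoset 5 hne)),
    iUnion_intCoset_prod_intCoset_mul, ← image_univ,
    thetaOn_image (injective_fst_smul_add_smul (by norm_num))]
  rfl

lemma finite_setOf_P2Form_eq (hd : 1 ≤ d) (k : ℕ) : {w | P2Form d w = k}.Finite :=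
  (finite_setOf_add_eq (Qpair_nonneg hd) (Qpair_nonneg hd) (finite_setOf_Qpair_eq hd)
    (finite_setOf_Qpair_eq hd) k).preimage
    (injective_fst_smul_add_smul (m := 2) (p := 5) (by norm_num)).injOn

end Lattices

def P1FormToP2Form : (ℤ × ℤ) × (ℤ × ℤ) ≃ (ℤ × ℤ) × (ℤ × ℤ) where
  toFun w := ((-2 * w.1.1 - 2 * w.1.2 - w.2.1 - w.2.2, 2 * w.1.1 + w.2.1), (w.1.1 + w.1.2, -w.1.1))
  invFun w := ((-w.2.2, w.2.1 + w.2.2),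
    (w.1.2 + 2 * w.2.2, -w.1.1 - w.1.2 - 2 * w.2.1 - 2 * w.2.2))
  left_inv w := by ext <;> simp only <;> ring
  right_inv w := by ext <;> simp only <;> ring

lemma P2Form_five_comp_P1FormToP2Form : P2Form 5 ∘ P1FormToP2Form = P1Form 5 := by
  ext w
  simp only [comp_apply, P1FormToP2Form, Equiv.coe_fn_mk, P1Form, P2Form, Qform]
  push_cast
  ring

lemma thetaOn_P1Form_five : thetaOn (P1Form 5) univ = thetaOn (P2Form 5) univ := by
  rw [← P2Form_five_comp_P1FormToP2Form, thetaOn_univ_comp_equiv]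

lemma Qform_ten_five_mul_eq_zero_or_ten_le (m y : ℤ) :
    Qform 10 (5 * m) y = 0 ∨ 10 ≤ Qform 10 (5 * m) y := by
  have h := four_mul_Qform 10 (5 * m) y
  push_cast at h
  rcases eq_or_ne y 0 with rfl | hy
  · rcases eq_or_ne m 0 with rfl | hm
    · simp [Qform]
    · have : 0 < m ^ 2 := by positivity
      right
      nlinarith
  · have : 0 < y ^ 2 := by positivity
    right
    nlinarith [sq_nonneg (2 * (5 * m) + y)]

lemma coeff_five_thetaOn_P1Form_ten : PowerSeries.coeff 5 (thetaOn (P1Form 10) univ) = 0 := by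
  suffices h : {w ∈ univ | P1Form 10 w = (5 : ℕ)} = ∅ by
    rw [coeff_thetaOn, h, ncard_empty, Nat.cast_zero]
  refine eq_empty_of_forall_notMem fun w ⟨_, hw⟩ => ?_
  simp only [P1Form, Nat.cast_ofNat] at hw
  have := Qform_nonneg (d := 10) (by norm_num) (5 * w.1.1) w.1.2
  have := Qform_nonneg (d := 10) (by norm_num) (5 * w.2.1) w.2.2
  rcases Qform_ten_five_mul_eq_zero_or_ten_le w.1.1 w.1.2 with h1 | h1 <;>
    rcases Qform_ten_five_mul_eq_zero_or_ten_le w.2.1 w.2.2 with h2 | h2 <;>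
    omega

lemma coeff_five_thetaOn_P2Form_ten_ne_zero :
    PowerSeries.coeff 5 (thetaOn (P2Form 10) univ) ≠ 0 := by
  have hfin : {w ∈ univ | P2Form 10 w = (5 : ℕ)}.Finite := by
    simpa only [mem_univ, true_and] using finite_setOf_P2Form_eq (by norm_num) 5
  rw [coeff_thetaOn, Nat.cast_ne_zero, ← pos_iff_ne_zero, ncard_pos hfin]
  exact ⟨((1, 0), (0, 0)), mem_univ _, by norm_num [P2Form, Qform]⟩

lemma P1_ne_P2 : P1 ≠ P2 := by
  intro h
  have h2 := congrArg (MvPolynomial.eval fun i : Fin 9 => if i = 2 then (1 : ℤ) else 0) h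
  simp [P1, P2] at h2

theorem stmt18 :
    P1 ≠ P2 ∧
    MvPolynomial.aeval (T5 5) P1 = MvPolynomial.aeval (T5 5) P2 ∧
    MvPolynomial.aeval (T5 10) P1 ≠ MvPolynomial.aeval (T5 10) P2 := by
  refine ⟨P1_ne_P2, ?_, fun h => coeff_five_thetaOn_P2Form_ten_ne_zero ?_⟩
  · rw [aeval_P1 (by norm_num), aeval_P2 (by norm_num), thetaOn_P1Form_five]
  · rw [← aeval_P2 (by norm_num), ← h, aeval_P1 (by norm_num), coeff_five_thetaOn_P1Form_ten]
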